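/- arXiv:2312.09058 — 2 statements merged into one kernel-verified Lean document; each statement's English description precedes it below -/
import Mathlib

section
/- Let S* be a partition of the player set N, and let the normal form gadget N(x,y) be the n-player game where all players other than x and y have a single action and utility 0, and players x and y play the prisoner's-dilemma variant with payoffs u(C,C)=(3,3), u(C,D)=(0,5), u(D,C)=(5,0), u(D,D)=(1,1). Under coalition structure S*, the all-D default profile is a Nash equilibrium of N(x,y) if and only if x and y lie in different blocks of S*. -/
noncomputable section
open Classical

/-- Payoffs of the prisoner's-dilemma variant; `true` is Cooperate, `false` is Defect. -/
def pd1 : Bool → Bool → ℤ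
  | true,  true  => 3
  | true,  false => 0
  | false, true  => 5
  | false, false => 1

def pd2 : Bool → Bool → ℤ
  | true,  true  => 3
  | true,  false => 5
  | false, true  => 0
  | false, false => 1

/-- Utilities of the normal form gadget `N(x,y)`: players other than `x, y` are
dummies with utility `0`, while `x` and `y` play the prisoner's-dilemma variant.
(Dummy players' actions never affect any utility.) -/
def gadgetUtil {n : ℕ} (x y : Fin n) : Fin n → (Fin n → Bool) → ℤ :=
  fun i σ => if i = x then pd1 (σ x) (σ y) else if i = y then pd2 (σ x) (σ y) else 0

/-- A profile `σ` is a Nash equilibrium under the coalition structure `S` (a partition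
of the players, given as an equivalence relation) if no block can strictly increase
its total utility by jointly deviating in its members' coordinates while all other
players' actions stay fixed. -/
def CoalitionNash {n : ℕ} (S : Setoid (Fin n))
    (u : Fin n → (Fin n → Bool) → ℤ) (σ : Fin n → Bool) : Prop :=
  ∀ i : Fin n, ∀ σ' : Fin n → Bool,
    (∀ j, ¬ S.r i j → σ' j = σ j) →
    (∑ j : Fin n, if S.r i j then u j σ' else 0) ≤
      ∑ j : Fin n, if S.r i j then u j σ else 0

lemma gadget_sum {n : ℕ} (S : Setoid (Fin n)) (x y : Fin n) (hxy : x ≠ y)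
    (i : Fin n) (σ : Fin n → Bool) :
    (∑ j : Fin n, if S.r i j then gadgetUtil x y j σ else 0) =
      (if S.r i x then pd1 (σ x) (σ y) else 0) +
      (if S.r i y then pd2 (σ x) (σ y) else 0) := by
  have h : ∀ j : Fin n, (if S.r i j then gadgetUtil x y j σ else 0) =
      (if j = x then (if S.r i x then pd1 (σ x) (σ y) else 0) else 0) +
      (if j = y then (if S.r i y then pd2 (σ x) (σ y) else 0) else 0) := by
    intro j
    by_cases hjx : j = x <;> by_cases hjy : j = y <;>
      simp_all [gadgetUtil]
  rw [Finset.sum_congr rfl fun j _ => h j, Finset.sum_add_distrib]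
  simp [Finset.sum_ite_eq']

/-- Under a coalition structure `S*`, the all-Defect default profile of the normal
form gadget `N(x,y)` is a Nash equilibrium iff `x` and `y` lie in different blocks. -/
theorem gadget_default_nash_iff {n : ℕ} (S : Setoid (Fin n)) (x y : Fin n)
    (hxy : x ≠ y) :
    CoalitionNash S (gadgetUtil x y) (fun _ => false) ↔ ¬ S.r x y := by
  constructor
  · intro hN hr
    have := hN x (fun j => if S.r x j then true else false)
      (fun j hj => by simp [hj])
    rw [gadget_sum S x y hxy, gadget_sum S x y hxy] at this
    simp [S.refl' x, hr, pd1, pd2] at this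
  · intro hr i σ' hσ'
    rw [gadget_sum S x y hxy, gadget_sum S x y hxy]
    by_cases hix : S.r i x <;> by_cases hiy : S.r i y
    · exact absurd (S.trans' (S.symm' hix) hiy) hr
    · have hy : σ' y = false := hσ' y hiy
      have : pd1 (σ' x) (σ' y) ≤ 1 := by cases h : σ' x <;> simp [hy, pd1]
      simp only [hix, hiy, if_true, if_false]
      simpa [pd1] using this
    · have hx : σ' x = false := hσ' x hix
      have : pd2 (σ' x) (σ' y) ≤ 1 := by cases h : σ' y <;> simp [hx, pd2]
      simp only [hix, hiy, if_true, if_false]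
      simpa [pd2] using this
    · simp [hix, hiy]
end
end

section
/- Let v ∈ [0,1]^n have a unique maximizer i (v_i > v_j for all j ≠ i), let v_smax = max_{j≠i} v_j, and let T ⊆ N \ {i}. In the second-price auction with personalized reserves where r_j = v_smax for j ∈ T and r_j = v_i for j ∉ T, truthful bidding (b_j = v_j for all j) is a Nash equilibrium under coalition structure S* if and only if no agent in T lies in the same block of S* as i. -/
noncomputable section

/-- Auction gadget: let `v ∈ [0,1]^n` have unique maximizer `i`, let
`v_smax = max_{j ≠ i} v_j`, and `T ⊆ N \ {i}`. In the second-price auction with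
personalized reserves `r_j = v_smax` for `j ∈ T` and `r_j = v_i` otherwise, truthful
bidding is a Nash equilibrium under coalition structure `S` iff no agent in `T` is in
the same block of `S` as `i`. A coalition's deviation is a bid vector agreeing with
the truthful bids outside the coalition; when a member `w` of the coalition is a
highest bidder and accepts, the coalition's gain is the maximum value inside the
coalition minus the price `max(r_w, max_{j ≠ w} b'_j)` (the item is redistributed
within the winning coalition); truthful bidding gives every coalition utility `0`,
so it is an equilibrium iff no coalition deviation yields strictly positive gain. -/
theorem auction_gadget_truthful_nash_iff {n : ℕ} (hn : 2 ≤ n)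
    (v : Fin n → ℝ) (hv01 : ∀ j, v j ∈ Set.Icc (0 : ℝ) 1)
    (i : Fin n) (hmax : ∀ j, j ≠ i → v j < v i)
    (T : Finset (Fin n)) (hT : i ∉ T) (S : Setoid (Fin n)) :
    let vsmax : ℝ := ⨆ j : {j : Fin n // j ≠ i}, v j
    let r : Fin n → ℝ := fun j => if j ∈ T then vsmax else v i
    ((∀ (x w : Fin n) (b' : Fin n → ℝ),
        (∀ j, ¬ S.r x j → b' j = v j) →
        (∀ j, b' j ≤ b' w) →
        S.r x w →
        (⨆ j : {j : Fin n // S.r x j}, v j) -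
            max (r w) (⨆ j : {j : Fin n // j ≠ w}, b' j) ≤ 0) ↔
      ∀ j ∈ T, ¬ S.r i j) := by
  intro vsmax r
  classical
  haveI : Nontrivial (Fin n) := Fin.nontrivial_iff_two_le.mpr hn
  obtain ⟨j0, hj0⟩ := exists_ne i
  haveI hne : Nonempty {j : Fin n // j ≠ i} := ⟨⟨j0, hj0⟩⟩
  have hvsmax_lt : vsmax < v i := by
    obtain ⟨⟨jm, hjm⟩, hmaxm⟩ := Finite.exists_max (fun j : {j : Fin n // j ≠ i} => v j.1)
    calc vsmax ≤ v jm := ciSup_le hmaxm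
      _ < v i := hmax jm hjm
  have hvsmax_ub : ∀ j, j ≠ i → v j ≤ vsmax := fun j hj =>
    le_ciSup (f := fun j : {j : Fin n // j ≠ i} => v j.1)
      (Set.finite_range _).bddAbove ⟨j, hj⟩
  have hvsmax_nonneg : (0 : ℝ) ≤ vsmax :=
    le_trans (hv01 j0).1 (hvsmax_ub j0 hj0)
  constructor
  · intro H t ht hst
    set b' : Fin n → ℝ := fun j => if S.r i j then (if j = t then 2 else 0) else v j with hb'
    have h1 : ∀ j, ¬ S.r i j → b' j = v j := by
      intro j hj; simp [hb', hj]
    have hbt : b' t = 2 := by simp [hb', hst]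
    have h2 : ∀ j, b' j ≤ b' t := by
      intro j
      rw [hbt]
      by_cases hj : S.r i j
      · simp only [hb', hj, if_true]
        split <;> norm_num
      · rw [h1 j hj]
        linarith [(hv01 j).2]
    have key := H i t b' h1 h2 hst
    have hsup1 : v i ≤ ⨆ j : {j : Fin n // S.r i j}, v j :=
      le_ciSup (f := fun j : {j : Fin n // S.r i j} => v j.1)
        (Set.finite_range _).bddAbove ⟨i, S.iseqv.refl i⟩
    haveI : Nonempty {j : Fin n // j ≠ t} := by
      rcases exists_ne t with ⟨j, hj⟩; exact ⟨⟨j, hj⟩⟩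
    have hsup2 : (⨆ j : {j : Fin n // j ≠ t}, b' j) ≤ vsmax := by
      apply ciSup_le
      rintro ⟨j, hj⟩
      by_cases hij : S.r i j
      · have hbj : b' j = 0 := by simp [hb', hij, hj]
        rw [hbj]; exact hvsmax_nonneg
      · rw [h1 j hij]
        have hji : j ≠ i := by rintro rfl; exact hij (S.iseqv.refl _)
        exact hvsmax_ub j hji
    have hrt : r t = vsmax := by simp [r, ht]
    rw [hrt] at key
    have h3 : max vsmax (⨆ j : {j : Fin n // j ≠ t}, b' j) ≤ vsmax :=
      max_le le_rfl hsup2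
    linarith
  · intro H x w b' hagree hwmax hxw
    haveI : Nonempty {j : Fin n // S.r x j} := ⟨⟨x, S.iseqv.refl x⟩⟩
    by_cases hxi : S.r x i
    · have hwT : w ∉ T := by
        intro hwT
        exact H w hwT (S.iseqv.trans (S.iseqv.symm hxi) hxw)
      have hrw : r w = v i := by simp [r, hwT]
      have hsup : (⨆ j : {j : Fin n // S.r x j}, v j) ≤ v i := by
        apply ciSup_le
        rintro ⟨j, hj⟩
        rcases eq_or_ne j i with rfl | hji
        · exact le_rfl
        · exact (hmax j hji).le
      rw [hrw]
      have h4 : v i ≤ max (v i) (⨆ j : {j : Fin n // j ≠ w}, b' j) := le_max_left _ _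
      linarith
    · have hiw : i ≠ w := by rintro rfl; exact hxi hxw
      have hbi : b' i = v i := hagree i hxi
      have hsup1 : (⨆ j : {j : Fin n // S.r x j}, v j) ≤ vsmax := by
        apply ciSup_le
        rintro ⟨j, hj⟩
        have hji : j ≠ i := by rintro rfl; exact hxi hj
        exact hvsmax_ub j hji
      have hsup2 : v i ≤ ⨆ j : {j : Fin n // j ≠ w}, b' j := by
        calc v i = b' i := hbi.symm
          _ ≤ _ := le_ciSup (f := fun j : {j : Fin n // j ≠ w} => b' j.1)
            (Set.finite_range _).bddAbove ⟨i, hiw⟩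
      have h5 := le_max_right (r w) (⨆ j : {j : Fin n // j ≠ w}, b' j)
      linarith
end
end
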